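/- arXiv:2410.14190 — 2 statements merged into one kernel-verified Lean document; each statement's English description precedes it below -/
import Mathlib

section
/- For |q|<1, ω(q) = ∑_{n≥0} q^n/(q;q^2)_{n+1}, where ω(q) = ∑_{n≥0} q^{2n^2+2n}/(q;q^2)_{n+1}^2. -/
open scoped BigOperators

noncomputable def qPoch (a q : ℂ) (n : ℕ) : ℂ := ∏ j ∈ Finset.range n, (1 - a * q ^ j)

noncomputable def qPochInf (a q : ℂ) : ℂ := ∏' j : ℕ, (1 - a * q ^ j)

/-!
Expanding one factor `1 / (q;q²)_{n+1}` of each term of `ω(q)` by the `q`-binomial series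
`∑_N [N, n]_{q²} q^N = q^n / (q;q²)_{n+1}` turns `ω(q)` into a double series. Summed in the other
order its rows collapse, by the finite identity
`∑_{n ≤ N} [N, n]_Q Q^{n²} β^n / (β;Q)_{n+1} = 1 / (β;Q)_{N+1}`, to `q^N / (q;q²)_{N+1}`. The factor
`Q^{n²}` makes the double series absolutely convergent, which justifies the interchange. The argument
works for arbitrary `Q, β, z` in the unit disc; `ω` is the case `Q = q²`, `β = z = q`.
-/

open Finset

section GaussianBinomial

variable {R : Type*} [CommRing R] (Q : R)

def qBinom : ℕ → ℕ → R
  | _, 0 => 1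
  | 0, _ + 1 => 0
  | N + 1, k + 1 => qBinom N k + Q ^ (k + 1) * qBinom N (k + 1)

@[simp]
theorem qBinom_zero_right (N : ℕ) : qBinom Q N 0 = 1 := by
  cases N <;> rfl

theorem qBinom_succ_succ (N k : ℕ) :
    qBinom Q (N + 1) (k + 1) = qBinom Q N k + Q ^ (k + 1) * qBinom Q N (k + 1) :=
  rfl

theorem qBinom_eq_zero_of_lt : ∀ {N k : ℕ}, N < k → qBinom Q N k = 0
  | 0, _ + 1, _ => rfl
  | N + 1, k + 1, h => by
    rw [qBinom_succ_succ, qBinom_eq_zero_of_lt (by omega), qBinom_eq_zero_of_lt (by omega),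
      mul_zero, add_zero]

@[simp]
theorem qBinom_self : ∀ N : ℕ, qBinom Q N N = 1
  | 0 => rfl
  | N + 1 => by
    rw [qBinom_succ_succ, qBinom_self N, qBinom_eq_zero_of_lt Q N.lt_succ_self, mul_zero, add_zero]

-- The division-free form of `[N, k + 1] / [N, k] = (1 - Q^(N - k)) / (1 - Q^(k + 1))` for
-- `N = m + k + 1`.
theorem one_sub_pow_mul_qBinom : ∀ m k : ℕ,
    (1 - Q ^ (m + 1)) * qBinom Q (m + k + 1) k =
      (1 - Q ^ (k + 1)) * qBinom Q (m + k + 1) (k + 1)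
  | 0, 0 => by simp
  | 0, k + 1 => by
    have ih := one_sub_pow_mul_qBinom 0 k
    simp only [zero_add, qBinom_self, mul_one] at ih ⊢
    rw [qBinom_succ_succ, qBinom_self]
    linear_combination ih
  | m + 1, 0 => by
    have ih := one_sub_pow_mul_qBinom m 0
    simp only [add_zero, qBinom_zero_right, mul_one, zero_add, pow_one] at ih ⊢
    rw [qBinom_succ_succ, qBinom_zero_right]
    linear_combination Q * ih
  | m + 1, k + 1 => by
    have ih₁ := one_sub_pow_mul_qBinom (m + 1) k
    have ih₂ := one_sub_pow_mul_qBinom m (k + 1)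
    rw [show m + 1 + k + 1 = m + k + 2 by ring] at ih₁
    rw [show m + (k + 1) + 1 = m + k + 2 by ring] at ih₂
    rw [show m + 1 + (k + 1) + 1 = m + k + 2 + 1 by ring, qBinom_succ_succ Q (m + k + 2) k,
      qBinom_succ_succ Q (m + k + 2) (k + 1)]
    linear_combination ih₁ + Q ^ (k + 2) * ih₂

-- For `N ≤ k` the truncated exponent `N - k` is `0`; the identity still holds there.
theorem qBinom_succ_succ' (N k : ℕ) :
    qBinom Q (N + 1) (k + 1) = Q ^ (N - k) * qBinom Q N k + qBinom Q N (k + 1) := by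
  rcases lt_or_ge k N with hk | hk
  · obtain ⟨m, rfl⟩ : ∃ m, N = m + k + 1 := ⟨N - k - 1, by omega⟩
    rw [qBinom_succ_succ, show m + k + 1 - k = m + 1 by omega]
    linear_combination one_sub_pow_mul_qBinom Q m k
  · rw [qBinom_succ_succ, qBinom_eq_zero_of_lt Q (by omega : N < k + 1), Nat.sub_eq_zero_of_le hk]
    ring

end GaussianBinomial

theorem norm_qBinom_le {R : Type*} [NormedCommRing R] [NormOneClass R] {Q : R} (hQ : ‖Q‖ < 1) :
    ∀ N k : ℕ, ‖qBinom Q N k‖ ≤ (1 - ‖Q‖)⁻¹ ^ k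
  | _, 0 => by simp
  | 0, k + 1 => by simp [qBinom]; positivity
  | N + 1, k + 1 => by
    set C := (1 - ‖Q‖)⁻¹
    have hC : 1 + ‖Q‖ * C = C := by simp only [C]; field_simp [(sub_pos.2 hQ).ne']; ring
    have hQk : ‖Q ^ (k + 1)‖ ≤ ‖Q‖ :=
      (norm_pow_le' Q k.succ_pos).trans (pow_le_of_le_one (norm_nonneg Q) hQ.le k.succ_ne_zero)
    calc ‖qBinom Q (N + 1) (k + 1)‖
        ≤ ‖qBinom Q N k‖ + ‖Q ^ (k + 1)‖ * ‖qBinom Q N (k + 1)‖ :=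
          (norm_add_le _ _).trans (add_le_add_right (norm_mul_le _ _) _)
      _ ≤ C ^ k + ‖Q‖ * C ^ (k + 1) := by
          gcongr
          · exact norm_qBinom_le hQ N k
          · exact norm_qBinom_le hQ N (k + 1)
      _ = C ^ k * (1 + ‖Q‖ * C) := by ring
      _ = C ^ (k + 1) := by rw [hC, pow_succ]

section QPochhammer

theorem qPoch_succ (a Q : ℂ) (n : ℕ) : qPoch a Q (n + 1) = qPoch a Q n * (1 - a * Q ^ n) :=
  prod_range_succ _ _

theorem qPoch_succ' (a Q : ℂ) (n : ℕ) : qPoch a Q (n + 1) = (1 - a) * qPoch (a * Q) Q n := by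
  simp only [qPoch, prod_range_succ', pow_zero, mul_one, pow_succ, mul_assoc, mul_comm Q]
  exact mul_comm _ _

variable {a Q : ℂ}

theorem one_sub_norm_pow_le_norm_qPoch (ha : ‖a‖ ≤ 1) (hQ : ‖Q‖ ≤ 1) (n : ℕ) :
    (1 - ‖a‖) ^ n ≤ ‖qPoch a Q n‖ := by
  rw [qPoch, norm_prod, ← card_range n, ← prod_const, card_range]
  refine prod_le_prod (fun _ _ ↦ sub_nonneg.2 ha) fun j _ ↦ ?_
  calc 1 - ‖a‖ ≤ 1 - ‖a * Q ^ j‖ := by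
        rw [norm_mul, norm_pow]
        gcongr
        exact mul_le_of_le_one_right (norm_nonneg a) (pow_le_one₀ (norm_nonneg Q) hQ)
    _ = ‖(1 : ℂ)‖ - ‖a * Q ^ j‖ := by rw [norm_one]
    _ ≤ ‖1 - a * Q ^ j‖ := norm_sub_norm_le _ _

theorem qPoch_ne_zero (ha : ‖a‖ < 1) (hQ : ‖Q‖ ≤ 1) (n : ℕ) : qPoch a Q n ≠ 0 :=
  norm_pos_iff.1 <| (pow_pos (sub_pos.2 ha) n).trans_le <|
    one_sub_norm_pow_le_norm_qPoch ha.le hQ n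

theorem norm_inv_qPoch_le (ha : ‖a‖ < 1) (hQ : ‖Q‖ ≤ 1) (n : ℕ) :
    ‖(qPoch a Q n)⁻¹‖ ≤ (1 - ‖a‖)⁻¹ ^ n := by
  rw [norm_inv, inv_pow]
  exact inv_anti₀ (pow_pos (sub_pos.2 ha) n) (one_sub_norm_pow_le_norm_qPoch ha.le hQ n)

end QPochhammer

-- The second Pascal rule splits the sum for `N + 1` at `β` into the sums for `N` at `β` and
-- at `β Q`.
theorem qBinom_term_succ (Q β : ℂ) {N n : ℕ} (hn : n ≤ N) :
    qBinom Q (N + 1) (n + 1) * Q ^ (n + 1) ^ 2 * β ^ (n + 1) / qPoch β Q (n + 1 + 1) =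
      qBinom Q N (n + 1) * Q ^ (n + 1) ^ 2 * β ^ (n + 1) / qPoch β Q (n + 1 + 1) +
        β * Q ^ (N + 1) / (1 - β) *
          (qBinom Q N n * Q ^ n ^ 2 * (β * Q) ^ n / qPoch (β * Q) Q (n + 1)) := by
  obtain ⟨d, rfl⟩ := Nat.exists_eq_add_of_le hn
  rw [qBinom_succ_succ', qPoch_succ' β Q (n + 1), Nat.add_sub_cancel_left, div_mul_div_comm]
  ring

theorem sum_qBinom_div_qPoch (Q : ℂ) :
    ∀ (N : ℕ) (β : ℂ), qPoch β Q (N + 1) ≠ 0 →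
      ∑ n ∈ range (N + 1), qBinom Q N n * Q ^ n ^ 2 * β ^ n / qPoch β Q (n + 1) =
        1 / qPoch β Q (N + 1)
  | 0, β, _ => by simp [qPoch]
  | N + 1, β, hβ => by
    have hβ₁ : qPoch β Q (N + 1) ≠ 0 := by
      rw [qPoch_succ] at hβ
      exact left_ne_zero_of_mul hβ
    have hβQ : qPoch (β * Q) Q (N + 1) ≠ 0 := by
      rw [qPoch_succ'] at hβ
      exact right_ne_zero_of_mul hβ
    rw [sum_range_succ', sum_congr rfl fun n hn ↦ qBinom_term_succ Q β
      (Nat.lt_succ_iff.1 (mem_range.1 hn)), sum_add_distrib, ← mul_sum,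
      sum_qBinom_div_qPoch Q N (β * Q) hβQ, add_right_comm]
    have hβ_sum : ∑ n ∈ range (N + 1),
        qBinom Q N (n + 1) * Q ^ (n + 1) ^ 2 * β ^ (n + 1) / qPoch β Q (n + 1 + 1) +
          qBinom Q (N + 1) 0 * Q ^ 0 ^ 2 * β ^ 0 / qPoch β Q (0 + 1) =
        1 / qPoch β Q (N + 1) := by
      rw [← sum_qBinom_div_qPoch Q N β hβ₁, qBinom_zero_right, ← qBinom_zero_right Q N,
        ← sum_range_succ' (fun n ↦ qBinom Q N n * Q ^ n ^ 2 * β ^ n / qPoch β Q (n + 1)),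
        sum_range_succ, qBinom_eq_zero_of_lt Q N.lt_succ_self, zero_mul, zero_mul, zero_div,
        add_zero]
    have hsucc := qPoch_succ β Q (N + 1)
    rw [hβ_sum, div_mul_div_comm, mul_one, ← qPoch_succ', hsucc]
    rw [hsucc] at hβ
    field_simp [left_ne_zero_of_mul hβ, right_ne_zero_of_mul hβ]
    ring

section Series

variable {Q z : ℂ}

theorem summable_qBinom_mul_pow (hQ : ‖Q‖ < 1) (hz : ‖z‖ < 1) (k : ℕ) :
    Summable fun N ↦ qBinom Q N k * z ^ N := by
  refine .of_norm_bounded ((summable_geometric_of_lt_one (norm_nonneg z) hz).mul_left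
    ((1 - ‖Q‖)⁻¹ ^ k)) fun N ↦ ?_
  rw [norm_mul, norm_pow]
  gcongr
  exact norm_qBinom_le hQ N k

theorem tsum_qBinom_mul_pow (hQ : ‖Q‖ < 1) (hz : ‖z‖ < 1) :
    ∀ k : ℕ, ∑' N, qBinom Q N k * z ^ N = z ^ k / qPoch z Q (k + 1)
  | 0 => by simp [qPoch, tsum_geometric_of_norm_lt_one hz, div_eq_inv_mul]
  | k + 1 => by
    set T := ∑' N, qBinom Q N (k + 1) * z ^ N
    have hT : T = z * (z ^ k / qPoch z Q (k + 1)) + z * Q ^ (k + 1) * T := calc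
      T = ∑' N, qBinom Q (N + 1) (k + 1) * z ^ (N + 1) := by
        simp [T, (summable_qBinom_mul_pow hQ hz (k + 1)).tsum_eq_zero_add, qBinom]
      _ = ∑' N, (z * (qBinom Q N k * z ^ N) + z * Q ^ (k + 1) * (qBinom Q N (k + 1) * z ^ N)) :=
        tsum_congr fun N ↦ by rw [qBinom_succ_succ]; ring
      _ = z * (z ^ k / qPoch z Q (k + 1)) + z * Q ^ (k + 1) * T := by
        rw [((summable_qBinom_mul_pow hQ hz k).mul_left z).tsum_add
          ((summable_qBinom_mul_pow hQ hz (k + 1)).mul_left _), tsum_mul_left, tsum_mul_left,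
          tsum_qBinom_mul_pow hQ hz k]
    have hne := qPoch_ne_zero hz hQ.le (k + 2)
    rw [qPoch_succ] at hne
    rw [qPoch_succ, eq_div_iff hne]
    field_simp [left_ne_zero_of_mul hne] at hT
    linear_combination hT

end Series

theorem summable_pow_mul_pow_sq (K : ℝ) {r : ℝ} (hr₀ : 0 ≤ r) (hr : r < 1) :
    Summable fun n : ℕ ↦ K ^ n * r ^ n ^ 2 := by
  have hsmall : ∀ᶠ n : ℕ in Filter.atTop, |K| * r ^ n ≤ 1 / 2 := by
    have := (tendsto_pow_atTop_nhds_zero_of_lt_one hr₀ hr).const_mul |K|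
    rw [mul_zero] at this
    exact this.eventually (ge_mem_nhds (by norm_num : (0 : ℝ) < 1 / 2))
  refine summable_geometric_two.of_norm_bounded_eventually_nat (hsmall.mono fun n hn ↦ ?_)
  calc ‖K ^ n * r ^ n ^ 2‖ = (|K| * r ^ n) ^ n := by
        rw [Real.norm_eq_abs, abs_mul, abs_pow, abs_pow, abs_of_nonneg hr₀]; ring
    _ ≤ (1 / 2) ^ n := pow_le_pow_left₀ (by positivity) hn n

section Fine

noncomputable def fineTerm (Q β z : ℂ) (N n : ℕ) : ℂ :=
  qBinom Q N n * Q ^ n ^ 2 * β ^ n / qPoch β Q (n + 1) * z ^ N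

variable {Q β z : ℂ}

theorem summable_fineTerm (hQ : ‖Q‖ < 1) (hβ : ‖β‖ < 1) (hz : ‖z‖ < 1) :
    Summable (Function.uncurry (fineTerm Q β z)) := by
  set B := (1 - ‖β‖)⁻¹
  set C := (1 - ‖Q‖)⁻¹
  refine .of_norm_bounded
    (g := fun p : ℕ × ℕ ↦ ‖z‖ ^ p.1 * (B * ((C * B) ^ p.2 * ‖Q‖ ^ p.2 ^ 2)))
    ((summable_geometric_of_lt_one (norm_nonneg z) hz).mul_of_nonneg
      ((summable_pow_mul_pow_sq _ (norm_nonneg Q) hQ).mul_left B)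
      (fun _ ↦ by positivity) fun _ ↦ by positivity) fun ⟨N, n⟩ ↦ ?_
  calc ‖fineTerm Q β z N n‖
      = ‖qBinom Q N n‖ * ‖Q‖ ^ n ^ 2 * ‖β‖ ^ n * ‖(qPoch β Q (n + 1))⁻¹‖ *
          ‖z‖ ^ N := by
        simp only [fineTerm, div_eq_mul_inv, norm_mul, norm_pow]
    _ ≤ C ^ n * ‖Q‖ ^ n ^ 2 * 1 * B ^ (n + 1) * ‖z‖ ^ N := by
        gcongr
        · exact norm_qBinom_le hQ N n
        · exact pow_le_one₀ (norm_nonneg β) hβ.le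
        · exact norm_inv_qPoch_le hβ hQ.le (n + 1)
    _ = ‖z‖ ^ N * (B * ((C * B) ^ n * ‖Q‖ ^ n ^ 2)) := by ring

theorem tsum_fineTerm_row (hβ : ‖β‖ < 1) (hQ : ‖Q‖ ≤ 1) (N : ℕ) :
    ∑' n, fineTerm Q β z N n = z ^ N / qPoch β Q (N + 1) := by
  rw [tsum_eq_sum (s := range (N + 1)) fun n hn ↦ by
      simp [fineTerm, qBinom_eq_zero_of_lt Q (by simpa using hn : N < n)]]
  simp only [fineTerm, ← sum_mul]
  rw [sum_qBinom_div_qPoch Q N β (qPoch_ne_zero hβ hQ _), one_div_mul_eq_div]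

theorem tsum_fineTerm_column (hQ : ‖Q‖ < 1) (hz : ‖z‖ < 1) (n : ℕ) :
    ∑' N, fineTerm Q β z N n =
      Q ^ n ^ 2 * (β * z) ^ n / (qPoch β Q (n + 1) * qPoch z Q (n + 1)) := by
  calc ∑' N, fineTerm Q β z N n
      = ∑' N, Q ^ n ^ 2 * β ^ n / qPoch β Q (n + 1) * (qBinom Q N n * z ^ N) :=
        tsum_congr fun N ↦ by rw [fineTerm]; ring
    _ = Q ^ n ^ 2 * (β * z) ^ n / (qPoch β Q (n + 1) * qPoch z Q (n + 1)) := by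
        rw [tsum_mul_left, tsum_qBinom_mul_pow hQ hz, div_mul_div_comm, mul_pow, mul_assoc]

theorem tsum_pow_sq_div_qPoch_mul_qPoch (hQ : ‖Q‖ < 1) (hβ : ‖β‖ < 1) (hz : ‖z‖ < 1) :
    ∑' n, Q ^ n ^ 2 * (β * z) ^ n / (qPoch β Q (n + 1) * qPoch z Q (n + 1)) =
      ∑' N, z ^ N / qPoch β Q (N + 1) := by
  simp only [← tsum_fineTerm_column hQ hz, ← tsum_fineTerm_row hβ hQ.le]
  exact (summable_fineTerm hQ hβ hz).tsum_comm

end Fine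

theorem stmt_6 (q : ℂ) (hq : ‖q‖ < 1) :
    (∑' n : ℕ, q ^ (2 * n ^ 2 + 2 * n) / (qPoch q (q ^ 2) (n + 1)) ^ 2) =
      ∑' n : ℕ, q ^ n / qPoch q (q ^ 2) (n + 1) := by
  have hq₂ : ‖q ^ 2‖ < 1 := by
    rw [norm_pow]
    exact pow_lt_one₀ (norm_nonneg q) hq two_ne_zero
  rw [← tsum_pow_sq_div_qPoch_mul_qPoch hq₂ hq hq]
  exact tsum_congr fun n ↦ by ring
end

section
/- For |q|<1, ∑_{n≥0} q^{2n+1} (q^{2n+6};q^2)_∞ (q^{2n+2};q^2)_∞ / ((q^{2n+3};q^2)_∞ (q^{2n+1};q^2)_∞) = q/((1-q)(1-q^3)) = ∑_{n≥1} ⌊(n+2)/3⌋ q^n. -/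
open scoped BigOperators

/-!
Write `P(a) = (a; q²)_∞` and `R n = P(q^(2n+6)) P(q^(2n+2)) / (P(q^(2n+3)) P(q^(2n+1)))`
(`pochRatio`), so that the `n`-th summand is `q^(2n+1) R n`. Since `P(a) = (1 - a) P(a q²)`, the
quotient `R n / R (n+1)` is a rational function of `x = q^(2n)`, and `T n = (1 - x)(1 - q⁴x) R n`
(`pochTelescope`) telescopes: `T (n+1) - T n = (1 - q)(1 - q³) q^(2n) R n`. As `T 0 = 0` and
`T n → 1` (because `P(a) → 1` as `a → 0`), the series sums to `q / ((1 - q)(1 - q³))`.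
For the second identity, `⌊(n+5)/3⌋ = ⌊(n+2)/3⌋ + 1` gives the generating function `S` the
functional equation `S = q + q² + q³ S + q³ / (1 - q)`.
-/

open Filter Topology Asymptotics

lemma hasSum_sub_of_tendsto {G : Type*} [AddCommGroup G] [TopologicalSpace G]
    [IsTopologicalAddGroup G] [T2Space G] {T : ℕ → G} {L : G}
    (hT : Tendsto T atTop (𝓝 L)) (hs : Summable fun n ↦ T (n + 1) - T n) :
    HasSum (fun n ↦ T (n + 1) - T n) (L - T 0) := by
  refine hs.hasSum_iff_tendsto_nat.2 ?_
  simp_rw [Finset.sum_range_sub]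
  exact hT.sub_const _

section

variable {a p : ℂ}

lemma summable_norm_mul_pow (hp : ‖p‖ < 1) : Summable fun j : ℕ ↦ ‖a * p ^ j‖ := by
  simpa only [norm_mul, norm_pow] using
    (summable_geometric_of_lt_one (norm_nonneg p) hp).mul_left ‖a‖

lemma tsum_norm_mul_pow (hp : ‖p‖ < 1) : ∑' j : ℕ, ‖a * p ^ j‖ = ‖a‖ / (1 - ‖p‖) := by
  simp only [norm_mul, norm_pow, tsum_mul_left, tsum_geometric_of_lt_one (norm_nonneg p) hp,
    div_eq_mul_inv]

namespace qPochInf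

lemma eq_tprod_one_add : qPochInf a p = ∏' j : ℕ, (1 + -(a * p ^ j)) := by
  simp only [qPochInf, sub_eq_add_neg]

lemma multipliable (hp : ‖p‖ < 1) : Multipliable fun j : ℕ ↦ 1 - a * p ^ j := by
  simpa only [sub_eq_add_neg] using
    multipliable_one_add_of_summable (by simpa only [norm_neg] using summable_norm_mul_pow hp)

lemma ne_zero (ha : ‖a‖ < 1) (hp : ‖p‖ < 1) : qPochInf a p ≠ 0 := by
  rw [eq_tprod_one_add]
  refine tprod_one_add_ne_zero_of_summable (fun j h ↦ ?_)
    (by simpa only [norm_neg] using summable_norm_mul_pow hp)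
  have : ‖a * p ^ j‖ < 1 := by
    rw [norm_mul, norm_pow]
    exact mul_lt_one_of_nonneg_of_lt_one_left (norm_nonneg a) ha
      (pow_le_one₀ (norm_nonneg p) hp.le)
  rw [← sub_eq_add_neg, sub_eq_zero] at h
  simp [← h] at this

lemma eq_one_sub_mul (hp : ‖p‖ < 1) : qPochInf a p = (1 - a) * qPochInf (a * p) p := by
  rw [qPochInf, tprod_eq_zero_mul']
  · simp only [pow_zero, mul_one, pow_succ', qPochInf, mul_assoc]
  · simpa only [pow_succ', mul_assoc] using multipliable (a := a * p) hp

lemma norm_sub_one_le (hp : ‖p‖ < 1) :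
    ‖qPochInf a p - 1‖ ≤ Real.exp (‖a‖ / (1 - ‖p‖)) - 1 := by
  have hprod := (multipliable (a := a) hp).hasProd
  simp only [sub_eq_add_neg] at hprod
  rw [eq_tprod_one_add, ← tsum_norm_mul_pow hp]
  refine le_of_tendsto ((hprod.tprod_eq ▸ hprod).sub_const 1).norm
    (Eventually.of_forall fun s ↦ (s.norm_prod_one_add_sub_one_le _).trans ?_)
  simp only [norm_neg]
  gcongr
  exact (summable_norm_mul_pow hp).sum_le_tsum s fun j _ ↦ norm_nonneg _

lemma tendsto_one_nhds_zero (hp : ‖p‖ < 1) : Tendsto (fun a ↦ qPochInf a p) (𝓝 0) (𝓝 1) := by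
  rw [tendsto_iff_norm_sub_tendsto_zero]
  refine squeeze_zero (fun _ ↦ norm_nonneg _) (fun a ↦ norm_sub_one_le hp) ?_
  have : Continuous fun a : ℂ ↦ Real.exp (‖a‖ / (1 - ‖p‖)) - 1 := by fun_prop
  simpa using this.tendsto 0

end qPochInf

end

section

variable {q : ℂ}

lemma norm_pow_lt_one (hq : ‖q‖ < 1) {k : ℕ} (hk : k ≠ 0) : ‖q ^ k‖ < 1 := by
  rw [norm_pow]
  exact pow_lt_one₀ (norm_nonneg q) hq hk

lemma one_sub_pow_ne_zero (hq : ‖q‖ < 1) {k : ℕ} (hk : k ≠ 0) : 1 - q ^ k ≠ 0 :=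
  sub_ne_zero.2 fun h ↦ by simpa [← h] using norm_pow_lt_one hq hk

lemma qPochInf_pow_ne_zero (hq : ‖q‖ < 1) {k : ℕ} (hk : k ≠ 0) : qPochInf (q ^ k) (q ^ 2) ≠ 0 :=
  qPochInf.ne_zero (norm_pow_lt_one hq hk) (norm_pow_lt_one hq two_ne_zero)

lemma qPochInf_pow_eq (hq : ‖q‖ < 1) (k : ℕ) :
    qPochInf (q ^ k) (q ^ 2) = (1 - q ^ k) * qPochInf (q ^ (k + 2)) (q ^ 2) := by
  rw [pow_add]
  exact qPochInf.eq_one_sub_mul (norm_pow_lt_one hq two_ne_zero)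

lemma tendsto_pow_two_mul_add (hq : ‖q‖ < 1) (k : ℕ) :
    Tendsto (fun n : ℕ ↦ q ^ (2 * n + k)) atTop (𝓝 0) :=
  (tendsto_pow_atTop_nhds_zero_of_norm_lt_one hq).comp
    (tendsto_atTop_mono (fun n ↦ by omega : ∀ n : ℕ, n ≤ 2 * n + k) tendsto_id)

noncomputable def pochRatio (q : ℂ) (n : ℕ) : ℂ :=
  qPochInf (q ^ (2 * n + 6)) (q ^ 2) * qPochInf (q ^ (2 * n + 2)) (q ^ 2) /
    (qPochInf (q ^ (2 * n + 3)) (q ^ 2) * qPochInf (q ^ (2 * n + 1)) (q ^ 2))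

noncomputable def pochTelescope (q : ℂ) (n : ℕ) : ℂ :=
  (1 - q ^ (2 * n)) * (1 - q ^ (2 * n + 4)) * pochRatio q n

lemma pochRatio_eq_mul_succ (hq : ‖q‖ < 1) (n : ℕ) :
    pochRatio q n = (1 - q ^ (2 * n + 6)) * (1 - q ^ (2 * n + 2)) /
      ((1 - q ^ (2 * n + 3)) * (1 - q ^ (2 * n + 1))) * pochRatio q (n + 1) := by
  have h5 := qPochInf_pow_ne_zero hq (k := 2 * n + 5) (by omega)
  have h3 := qPochInf_pow_ne_zero hq (k := 2 * n + 3) (by omega)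
  have e3 := one_sub_pow_ne_zero hq (k := 2 * n + 3) (by omega)
  have e1 := one_sub_pow_ne_zero hq (k := 2 * n + 1) (by omega)
  rw [pochRatio, pochRatio, qPochInf_pow_eq hq (2 * n + 6), qPochInf_pow_eq hq (2 * n + 2),
    qPochInf_pow_eq hq (2 * n + 3), qPochInf_pow_eq hq (2 * n + 1)]
  rw [show 2 * (n + 1) + 6 = 2 * n + 6 + 2 by ring, show 2 * (n + 1) + 2 = 2 * n + 2 + 2 by ring,
    show 2 * (n + 1) + 3 = 2 * n + 3 + 2 by ring, show 2 * (n + 1) + 1 = 2 * n + 1 + 2 by ring]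
  field_simp

lemma pochTelescope_succ_sub (hq : ‖q‖ < 1) (n : ℕ) :
    pochTelescope q (n + 1) - pochTelescope q n =
      (1 - q) * (1 - q ^ 3) * (q ^ (2 * n) * pochRatio q n) := by
  have e3 := one_sub_pow_ne_zero hq (k := 2 * n + 3) (by omega)
  have e1 := one_sub_pow_ne_zero hq (k := 2 * n + 1) (by omega)
  rw [pochTelescope, pochTelescope, pochRatio_eq_mul_succ hq n]
  field_simp
  ring

lemma tendsto_pochRatio (hq : ‖q‖ < 1) : Tendsto (pochRatio q) atTop (𝓝 1) := by
  have hP (k : ℕ) : Tendsto (fun n : ℕ ↦ qPochInf (q ^ (2 * n + k)) (q ^ 2)) atTop (𝓝 1) :=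
    (qPochInf.tendsto_one_nhds_zero (norm_pow_lt_one hq two_ne_zero)).comp
      (tendsto_pow_two_mul_add hq k)
  have h := ((hP 6).mul (hP 2)).div ((hP 3).mul (hP 1)) (by norm_num)
  simp only [mul_one, div_one] at h
  exact h

lemma tendsto_pochTelescope (hq : ‖q‖ < 1) : Tendsto (pochTelescope q) atTop (𝓝 1) := by
  have hpow (k : ℕ) : Tendsto (fun n : ℕ ↦ 1 - q ^ (2 * n + k)) atTop (𝓝 1) := by
    simpa using (tendsto_pow_two_mul_add hq k).const_sub 1
  have h := ((hpow 0).mul (hpow 4)).mul (tendsto_pochRatio hq)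
  simp only [mul_one] at h
  exact h

lemma summable_pow_mul_pochRatio (hq : ‖q‖ < 1) :
    Summable fun n : ℕ ↦ q ^ (2 * n) * pochRatio q n := by
  have h : (fun n : ℕ ↦ (q ^ 2) ^ n * pochRatio q n) =O[atTop] fun n ↦ (q ^ 2) ^ n * (1 : ℂ) :=
    (isBigO_refl _ _).mul ((tendsto_pochRatio hq).isBigO_one ℂ)
  have hg : Summable fun n : ℕ ↦ (q ^ 2) ^ n * (1 : ℂ) := by
    simpa only [mul_one] using summable_geometric_of_norm_lt_one (norm_pow_lt_one hq two_ne_zero)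
  simpa only [← pow_mul] using summable_of_isBigO_nat' hg h

lemma hasSum_pow_mul_pochRatio (hq : ‖q‖ < 1) :
    HasSum (fun n : ℕ ↦ q ^ (2 * n + 1) * pochRatio q n) (q / ((1 - q) * (1 - q ^ 3))) := by
  have e1 : 1 - q ≠ 0 := by simpa using one_sub_pow_ne_zero hq one_ne_zero
  have e3 := one_sub_pow_ne_zero hq three_ne_zero
  have hsum : Summable fun n ↦ pochTelescope q (n + 1) - pochTelescope q n := by
    simpa only [pochTelescope_succ_sub hq] using
      (summable_pow_mul_pochRatio hq).mul_left ((1 - q) * (1 - q ^ 3))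
  have hT : HasSum (fun n ↦ pochTelescope q (n + 1) - pochTelescope q n) 1 := by
    simpa [pochTelescope] using hasSum_sub_of_tendsto (tendsto_pochTelescope hq) hsum
  have hterm : (fun n : ℕ ↦ q ^ (2 * n + 1) * pochRatio q n) = fun n ↦
      q / ((1 - q) * (1 - q ^ 3)) * (pochTelescope q (n + 1) - pochTelescope q n) := by
    ext n
    rw [pochTelescope_succ_sub hq]
    field_simp
    ring
  simpa only [hterm, mul_one] using hT.mul_left (q / ((1 - q) * (1 - q ^ 3)))

lemma hasSum_div_three_mul_pow (hq : ‖q‖ < 1) :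
    HasSum (fun n : ℕ ↦ (((n + 2) / 3 : ℕ) : ℂ) * q ^ n) (q / ((1 - q) * (1 - q ^ 3))) := by
  have e1 : 1 - q ≠ 0 := by simpa using one_sub_pow_ne_zero hq one_ne_zero
  have e3 := one_sub_pow_ne_zero hq three_ne_zero
  obtain ⟨S, hS⟩ : Summable fun n : ℕ ↦ (((n + 2) / 3 : ℕ) : ℂ) * q ^ n := by
    refine .of_norm_bounded (summable_norm_pow_mul_geometric_of_norm_lt_one 1 hq) fun n ↦ ?_
    simp only [norm_mul, norm_pow, Complex.norm_natCast, pow_one]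
    gcongr
    exact_mod_cast (by omega : (n + 2) / 3 ≤ n)
  have htail : HasSum (fun n : ℕ ↦ (((n + 3 + 2) / 3 : ℕ) : ℂ) * q ^ (n + 3))
      (S - (q + q ^ 2)) := by
    simpa [Finset.sum_range_succ] using (hasSum_nat_add_iff' 3).2 hS
  have hshift : (fun n : ℕ ↦ (((n + 3 + 2) / 3 : ℕ) : ℂ) * q ^ (n + 3)) =
      fun n ↦ q ^ 3 * ((((n + 2) / 3 : ℕ) : ℂ) * q ^ n) + q ^ 3 * q ^ n := by
    ext n
    rw [show (n + 3 + 2) / 3 = (n + 2) / 3 + 1 by omega]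
    push_cast
    ring
  have hS' := htail.unique (hshift ▸ (hS.mul_left (q ^ 3)).add
    ((hasSum_geometric_of_norm_lt_one hq).mul_left (q ^ 3)))
  field_simp at hS'
  convert hS
  rw [div_eq_iff (mul_ne_zero e1 e3)]
  linear_combination -hS'

end

theorem stmt_13 (q : ℂ) (hq : ‖q‖ < 1) :
    (∑' n : ℕ, q ^ (2 * n + 1) * qPochInf (q ^ (2 * n + 6)) (q ^ 2) *
        qPochInf (q ^ (2 * n + 2)) (q ^ 2) /
        (qPochInf (q ^ (2 * n + 3)) (q ^ 2) * qPochInf (q ^ (2 * n + 1)) (q ^ 2))) =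
      q / ((1 - q) * (1 - q ^ 3)) ∧
    q / ((1 - q) * (1 - q ^ 3)) = ∑' n : ℕ, ((n + 2) / 3 : ℕ) * q ^ n := by
  have h := (hasSum_pow_mul_pochRatio hq).tsum_eq
  simp only [pochRatio, ← mul_div_assoc, ← mul_assoc] at h
  exact ⟨h, (hasSum_div_three_mul_pow hq).tsum_eq.symm⟩
end
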